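/- arXiv:2101.05676 — 2 statements merged into one kernel-verified Lean document; each statement's English description precedes it below -/
import Mathlib

section
/- If (a_1, ..., a_n), n ≥ 1, is the quiddity sequence of an infinite periodic integral frieze, then after finitely many 'cutting' reductions (removing an entry equal to 1 and decreasing its two cyclic neighbors by 1) one reaches a quiddity sequence all of whose entries are at least 2. -/
/-!
If `q i = 1`, the positions `i + 1 + nℤ` can be deleted from the frieze `a`: reindexing by the
increasing bijection `cutIndex` from `ℤ` onto the remaining positions gives an
`(n - 1)`-periodic frieze whose quiddity sequence is the cut of `q`, because
`a x (x + 3) = a x (x + 2) * a (x + 1) (x + 3) - 1`. The diamond rule survives because every step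
of `cutIndex` goes from `x` to `x + 1`, or across a deleted position to `x + 2` with
`a x (x + 2) = 1`, and across such steps the Ptolemy relation
`a x y * a x' y' - a x y' * a x' y = a x x' * a y y'` holds with right-hand side `1`.
A 1-periodic quiddity sequence has no entry `1`, since then `a s (s + 3) = q s ^ 2 - 1 > 0`, so
cutting can be repeated, lowering the period each time, until all entries are at least 2.
-/

/-- An infinite `n`-periodic integral frieze pattern: a row of 0s, a row of 1s, then
infinitely many rows of positive integers, satisfying the diamond rule and `n`-periodicity. -/
def IsInfiniteFrieze (n : ℕ) (a : ℤ → ℤ → ℤ) : Prop :=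
  (∀ i : ℤ, a i i = 0) ∧
  (∀ i : ℤ, a i (i + 1) = 1) ∧
  (∀ i j : ℤ, i + 2 ≤ j → 0 < a i j) ∧
  (∀ i j : ℤ, i + 1 ≤ j →
    a i j * a (i + 1) (j + 1) - a i (j + 1) * a (i + 1) j = 1) ∧
  (∀ i j : ℤ, a (i + n) (j + n) = a i j)

/-- `q : ℤ → ℤ` is the quiddity sequence of an infinite `n`-periodic integral frieze. -/
def IsInfQuiddity (n : ℕ) (q : ℤ → ℤ) : Prop :=
  (∀ i : ℤ, q (i + n) = q i) ∧
  ∃ a : ℤ → ℤ → ℤ, IsInfiniteFrieze n a ∧ ∀ i : ℤ, a i (i + 2) = q i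

/-- The cutting operation on an `n`-periodic quiddity sequence: an entry `q i = 1` is removed
and its two cyclic neighbours are decreased by 1, giving an `(n-1)`-periodic sequence. -/
def CutsTo (n : ℕ) (q q' : ℤ → ℤ) : Prop :=
  ∃ i : ℤ, q i = 1 ∧ (∀ j : ℤ, q' (j + ((n : ℤ) - 1)) = q' j) ∧
    q' (i + 1) = q (i + 1) - 1 ∧
    (∀ j : ℤ, i + 2 ≤ j → j ≤ i + n - 2 → q' j = q j) ∧
    q' (i + n - 1) = q (i + n - 1) - 1

namespace IsInfiniteFrieze

variable {n : ℕ} {a : ℤ → ℤ → ℤ}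

lemma apply_self (h : IsInfiniteFrieze n a) (x : ℤ) : a x x = 0 := h.1 x

lemma apply_add_one (h : IsInfiniteFrieze n a) (x : ℤ) : a x (x + 1) = 1 := h.2.1 x

lemma diamond (h : IsInfiniteFrieze n a) {x y : ℤ} (hxy : x + 1 ≤ y) :
    a x y * a (x + 1) (y + 1) - a x (y + 1) * a (x + 1) y = 1 :=
  h.2.2.2.1 x y hxy

lemma apply_add_add (h : IsInfiniteFrieze n a) (x y : ℤ) : a (x + n) (y + n) = a x y :=
  h.2.2.2.2 x y

lemma pos_of_lt (h : IsInfiniteFrieze n a) {x y : ℤ} (hxy : x < y) : 0 < a x y := by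
  obtain rfl | hxy := (Int.add_one_le_iff.2 hxy).eq_or_lt
  · simp [h.apply_add_one x]
  · exact h.2.2.1 x y (by omega)

lemma apply_add_mul (h : IsInfiniteFrieze n a) (x y m : ℤ) :
    a (x + m * n) (y + m * n) = a x y := by
  have hper : Function.Periodic (fun p => a (x + p) (y + p)) n := fun p => by
    simpa only [add_assoc] using h.apply_add_add (x + p) (y + p)
  simpa using hper.int_mul m 0

lemma row_rec (h : IsInfiniteFrieze n a) {x y : ℤ} (hxy : x + 1 ≤ y) :
    a x (y + 1) = a (y - 1) (y + 1) * a x y - a x (y - 1) := by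
  induction x, (show x ≤ y - 1 by omega) using Int.leInductionDown with
  | base => simp [h.apply_self, by simpa using h.apply_add_one (y - 1)]
  | pred x hx ih =>
    have D₁ := h.diamond (x := x - 1) (y := y - 1) (by omega)
    have D₂ := h.diamond (x := x - 1) (y := y) (by omega)
    rw [sub_add_cancel, sub_add_cancel] at D₁
    rw [sub_add_cancel] at D₂
    refine mul_left_cancel₀ (h.pos_of_lt (show x < y by omega)).ne' ?_
    linear_combination D₁ - D₂ + a (x - 1) y * ih (by omega)

lemma col_rec (h : IsInfiniteFrieze n a) {x y : ℤ} (hxy : x + 2 ≤ y) :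
    a x y = a x (x + 2) * a (x + 1) y - a (x + 2) y := by
  induction y, hxy using Int.leInduction with
  | base => simp [h.apply_self, by simpa [add_assoc] using h.apply_add_one (x + 1)]
  | succ y hy ih =>
    have D₁ := h.diamond (x := x) (y := y) (by omega)
    have D₂ := h.diamond (x := x + 1) (y := y) (by omega)
    rw [add_assoc, one_add_one_eq_two] at D₂
    refine mul_left_cancel₀ (h.pos_of_lt (show x + 1 < y by omega)).ne' ?_
    linear_combination D₂ - D₁ + a (x + 1) (y + 1) * ih

lemma ptolemy_skip_right (h : IsInfiniteFrieze n a) {x x' y : ℤ} (hx : x ≤ x') (hxy : x' ≤ y) :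
    a x y * a x' (y + 2) - a x (y + 2) * a x' y =
      a y (y + 2) * (a x y * a x' (y + 1) - a x (y + 1) * a x' y) := by
  have R := h.row_rec (x := x) (y := y + 1) (by omega)
  have R' := h.row_rec (x := x') (y := y + 1) (by omega)
  simp only [add_sub_cancel_right, add_assoc, one_add_one_eq_two] at R R'
  linear_combination a x y * R' - a x' y * R

lemma ptolemy_skip_left (h : IsInfiniteFrieze n a) {x y y' : ℤ} (hxy : x + 2 ≤ y) (hy : y ≤ y') :
    a x y * a (x + 2) y' - a x y' * a (x + 2) y =
      a x (x + 2) * (a (x + 1) y * a (x + 2) y' - a (x + 1) y' * a (x + 2) y) := by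
  have C := h.col_rec hxy
  have C' := h.col_rec (show x + 2 ≤ y' by omega)
  linear_combination a (x + 2) y' * C - a (x + 2) y * C'

lemma ptolemy_of_steps (h : IsInfiniteFrieze n a) {x x' y y' : ℤ}
    (hx : x' = x + 1 ∨ x' = x + 2) (hy : y' = y + 1 ∨ y' = y + 2) (hxy : x' ≤ y) :
    a x y * a x' y' - a x y' * a x' y = a x x' * a y y' := by
  have D₁ := h.diamond (x := x + 1) (y := y)
  rw [add_assoc, one_add_one_eq_two] at D₁
  rcases hx with rfl | rfl <;> rcases hy with rfl | rfl
  · rw [h.diamond hxy, h.apply_add_one, h.apply_add_one, mul_one]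
  · rw [h.ptolemy_skip_right (by omega) hxy, h.diamond hxy, h.apply_add_one, one_mul, mul_one]
  · rw [h.ptolemy_skip_left hxy (by omega), D₁ (by omega), h.apply_add_one, mul_one]
  · rw [h.ptolemy_skip_left hxy (by omega), h.ptolemy_skip_right (by omega) hxy, D₁ (by omega),
      mul_one]

lemma isInfQuiddity (h : IsInfiniteFrieze n a) : IsInfQuiddity n (fun s => a s (s + 2)) :=
  ⟨fun s => by simpa only [add_right_comm s 2] using h.apply_add_add s (s + 2), a, h, fun _ => rfl⟩

lemma apply_add_three (h : IsInfiniteFrieze n a) (x : ℤ) :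
    a x (x + 3) = a x (x + 2) * a (x + 1) (x + 3) - 1 := by
  have R := h.row_rec (x := x) (y := x + 2) (by omega)
  rw [show x + 2 - 1 = x + 1 by ring, h.apply_add_one] at R
  rw [show x + 3 = x + 2 + 1 by ring, R, show x + 2 + 1 = x + 3 by ring, mul_comm]

end IsInfiniteFrieze

/-- For `2 ≤ p`, the increasing bijection from `ℤ` onto `ℤ \ (i + 1 + pℤ)` that fixes
`i + 2, …, i + p`. -/
def cutIndex (p i s : ℤ) : ℤ := s + (s - i - 2) / (p - 1)

section cutIndex

variable {p i : ℤ}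

lemma cutIndex_add (hp : 2 ≤ p) (s : ℤ) : cutIndex p i (s + (p - 1)) = cutIndex p i s + p := by
  have : s + (p - 1) - i - 2 = s - i - 2 + 1 * (p - 1) := by ring
  rw [cutIndex, cutIndex, this, Int.add_mul_ediv_right _ _ (by omega)]
  ring

lemma cutIndex_of_le_of_le (hp : 2 ≤ p) {s : ℤ} (h₁ : i + 2 ≤ s) (h₂ : s ≤ i + p) :
    cutIndex p i s = s := by
  rw [cutIndex, (Int.ediv_eq_iff_of_pos (y := 0) (by omega)).2 ⟨by omega, by omega⟩, add_zero]

lemma cutIndex_self_add_one (hp : 2 ≤ p) : cutIndex p i (i + 1) = i := by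
  rw [cutIndex, (Int.ediv_eq_iff_of_pos (y := -1) (by omega)).2 ⟨by omega, by omega⟩]
  ring

lemma sub_le_cutIndex_sub (hp : 2 ≤ p) {s t : ℤ} (hst : s ≤ t) :
    t - s ≤ cutIndex p i t - cutIndex p i s := by
  have := Int.ediv_le_ediv (show 0 < p - 1 by omega) (show s - i - 2 ≤ t - i - 2 by omega)
  simp only [cutIndex]
  omega

lemma cutIndex_add_one (hp : 2 ≤ p) (s : ℤ) :
    cutIndex p i (s + 1) = cutIndex p i s + 1 ∨
      cutIndex p i (s + 1) = cutIndex p i s + 2 ∧ ∃ m : ℤ, cutIndex p i s = i + m * p := by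
  have hp' : 0 < p - 1 := by omega
  obtain ⟨hlo, hhi⟩ := (Int.ediv_eq_iff_of_pos hp').1 (rfl : (s - i - 2) / (p - 1) = _)
  set d := (s - i - 2) / (p - 1)
  simp only [cutIndex]
  by_cases hwrap : s - i - 1 = d * (p - 1) + (p - 1)
  · have : (s + 1 - i - 2) / (p - 1) = d + 1 :=
      (Int.ediv_eq_iff_of_pos hp').2 ⟨by linarith, by linarith⟩
    exact .inr ⟨by rw [this]; ring, d + 1, by linarith⟩
  · have : (s + 1 - i - 2) / (p - 1) = d :=
      (Int.ediv_eq_iff_of_pos hp').2 ⟨by linarith, lt_of_le_of_ne (by linarith) (by omega)⟩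
    exact .inl (by rw [this]; ring)

end cutIndex

/-- The frieze `a` with the rows and columns `i + 1 + nℤ` deleted. -/
def cutFrieze (n : ℕ) (i : ℤ) (a : ℤ → ℤ → ℤ) (s t : ℤ) : ℤ :=
  a (cutIndex n i s) (cutIndex n i t)

namespace IsInfiniteFrieze

variable {n : ℕ} {a : ℤ → ℤ → ℤ} {i : ℤ}

lemma cutIndex_step (h : IsInfiniteFrieze n a) (hn : 2 ≤ n) (hi : a i (i + 2) = 1) (s : ℤ) :
    (cutIndex n i (s + 1) = cutIndex n i s + 1 ∨ cutIndex n i (s + 1) = cutIndex n i s + 2) ∧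
      cutFrieze n i a s (s + 1) = 1 := by
  rcases cutIndex_add_one (i := i) (show (2 : ℤ) ≤ n by omega) s with hs | ⟨hs, m, hm⟩
  · exact ⟨.inl hs, by rw [cutFrieze, hs, h.apply_add_one]⟩
  · refine ⟨.inr hs, ?_⟩
    rw [cutFrieze, hs, hm, add_right_comm, h.apply_add_mul, hi]

lemma cut (h : IsInfiniteFrieze n a) (hn : 2 ≤ n) (hi : a i (i + 2) = 1) :
    IsInfiniteFrieze (n - 1) (cutFrieze n i a) := by
  have hn' : (2 : ℤ) ≤ n := by omega
  refine ⟨fun s => h.apply_self _, fun s => (h.cutIndex_step hn hi s).2, fun s t hst => ?_,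
    fun s t hst => ?_, fun s t => ?_⟩
  · exact h.pos_of_lt (by linarith [sub_le_cutIndex_sub (i := i) hn' (show s ≤ t by omega)])
  · have hst' := sub_le_cutIndex_sub (i := i) hn' hst
    calc _ = cutFrieze n i a s (s + 1) * cutFrieze n i a t (t + 1) :=
          h.ptolemy_of_steps (h.cutIndex_step hn hi s).1 (h.cutIndex_step hn hi t).1 (by omega)
      _ = 1 := by rw [(h.cutIndex_step hn hi s).2, (h.cutIndex_step hn hi t).2, mul_one]
  · rw [Nat.cast_sub (by omega), Nat.cast_one]
    simp only [cutFrieze, cutIndex_add hn']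
    exact h.apply_add_add _ _

end IsInfiniteFrieze

open Polynomial Chebyshev in
lemma chebyshevS_eval_pos {c : ℤ} (hc : 2 ≤ c) {k : ℤ} (hk : 0 ≤ k) : 0 < (S ℤ k).eval c := by
  suffices H : ∀ k : ℕ, 0 ≤ (S ℤ (k - 1)).eval c ∧ (S ℤ (k - 1)).eval c < (S ℤ k).eval c by
    lift k to ℕ using hk
    linarith [H k]
  intro k
  induction k with
  | zero => simp
  | succ k ih =>
    push_cast
    rw [add_sub_cancel_right, S_add_one, eval_sub, eval_mul, eval_X]
    constructor <;> nlinarith [ih.1, ih.2]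

open Polynomial Chebyshev in
lemma chebyshevS_sq_sub_mul (R : Type*) [CommRing R] (k : ℤ) :
    S R k ^ 2 - S R (k + 1) * S R (k - 1) = 1 := by
  have h := S_sq_add_S_sq R (k - 1)
  rw [sub_add_cancel] at h
  linear_combination h - S R (k - 1) * S_add_one R k

open Polynomial Chebyshev in
lemma isInfQuiddity_one_const {c : ℤ} (hc : 2 ≤ c) : IsInfQuiddity 1 (fun _ => c) := by
  refine ⟨fun _ => rfl, fun x y => (S ℤ (y - x - 1)).eval c,
    ⟨fun x => by simp, fun x => by simp, fun x y hxy => chebyshevS_eval_pos hc (by omega),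
      fun x y _ => ?_, fun x y => by simp⟩, fun x => by simp⟩
  beta_reduce
  rw [show y + 1 - (x + 1) - 1 = y - x - 1 by ring, show y + 1 - x - 1 = y - x - 1 + 1 by ring,
    show y - (x + 1) - 1 = y - x - 1 - 1 by ring]
  simpa [sq] using congrArg (eval c) (chebyshevS_sq_sub_mul ℤ (y - x - 1))

namespace IsInfQuiddity

variable {n : ℕ} {q : ℤ → ℤ} {i : ℤ}

lemma one_le (hq : IsInfQuiddity n q) (s : ℤ) : 1 ≤ q s := by
  obtain ⟨-, a, h, hqa⟩ := hq
  exact hqa s ▸ h.pos_of_lt (by omega)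

lemma two_le_of_period_one (hq : IsInfQuiddity 1 q) (s : ℤ) : 2 ≤ q s := by
  have hs := hq.one_le s
  obtain ⟨hper, a, h, hqa⟩ := hq
  have hnext : a (s + 1) (s + 3) = q s := by
    rw [show s + 3 = s + 1 + 2 by ring, hqa, ← hper s, Nat.cast_one]
  have := h.pos_of_lt (show s < s + 3 by omega)
  rw [h.apply_add_three, hqa, hnext] at this
  nlinarith

lemma exists_cut_of_three_le (hq : IsInfQuiddity n q) (hn : 3 ≤ n) (hi : q i = 1) :
    ∃ q', CutsTo n q q' ∧ IsInfQuiddity (n - 1) q' := by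
  obtain ⟨-, a, h, hqa⟩ := hq
  have hn' : (2 : ℤ) ≤ n := by omega
  have hi₀ : a i (i + 2) = 1 := (hqa i).trans hi
  have hb := h.cut (by omega) hi₀
  have hfix {s : ℤ} (h₁ : i + 2 ≤ s) (h₂ : s ≤ i + n) : cutIndex n i s = s :=
    cutIndex_of_le_of_le hn' h₁ h₂
  have hi' : a (i + n) (i + n + 2) = 1 := by
    simpa [add_right_comm i 2] using (h.apply_add_mul i (i + 2) 1).trans hi₀
  refine ⟨fun s => cutFrieze n i a s (s + 2), ⟨i, hi, fun j => ?_, ?_, fun j h₁ h₂ => ?_, ?_⟩,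
    hb.isInfQuiddity⟩
  · simpa [Nat.cast_sub (show 1 ≤ n by omega)] using hb.isInfQuiddity.1 j
  · show a (cutIndex n i (i + 1)) (cutIndex n i (i + 1 + 2)) = q (i + 1) - 1
    rw [← hqa, cutIndex_self_add_one hn', hfix (by omega) (by omega),
      show i + 1 + 2 = i + 3 by ring, h.apply_add_three, hi₀, one_mul]
  · show a (cutIndex n i j) (cutIndex n i (j + 2)) = q j
    rw [hfix (by omega) (by omega), hfix (by omega) (by omega), hqa]
  · show a (cutIndex n i (i + n - 1)) (cutIndex n i (i + n - 1 + 2)) = q (i + n - 1) - 1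
    have hlast : cutIndex n i (i + n - 1 + 2) = i + n - 1 + 3 := by
      rw [show i + n - 1 + 2 = i + 2 + (n - 1) by ring, cutIndex_add hn',
        hfix (by omega) (by omega)]
      ring
    rw [hfix (by omega) (by omega), hlast, h.apply_add_three, show i + n - 1 + 1 = i + n by ring,
      show i + n - 1 + 3 = i + n + 2 by ring, hi', mul_one, hqa]

-- For `n = 2` both neighbours of `i` are `i + 1`, which `CutsTo 2` lowers only once; the result
-- is still at least 2 because `a i (i + 4) = q (i + 1) - 2` is positive.
lemma exists_cut_of_period_two (hq : IsInfQuiddity 2 q) (hi : q i = 1) :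
    ∃ q', CutsTo 2 q q' ∧ IsInfQuiddity (2 - 1) q' := by
  obtain ⟨hper, a, h, hqa⟩ := hq
  have h₀ : a i (i + 2) = 1 := (hqa i).trans hi
  have h₂ : a (i + 2) (i + 4) = 1 := by
    rw [show i + 4 = i + 2 + 2 by ring, hqa, ← hi]
    simpa using hper i
  have h₃ : a i (i + 3) = q (i + 1) - 1 := by
    rw [h.apply_add_three, h₀, one_mul, show i + 3 = i + 1 + 2 by ring, hqa]
  have h₄ : a i (i + 4) = q (i + 1) - 2 := by
    have R := h.row_rec (x := i) (y := i + 3) (by omega)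
    rw [show i + 3 + 1 = i + 4 by ring, show i + 3 - 1 = i + 2 by ring, h₀, h₂, h₃] at R
    linear_combination R
  have hpos := h.pos_of_lt (show i < i + 4 by omega)
  refine ⟨fun _ => q (i + 1) - 1, ⟨i, hi, fun _ => rfl, rfl, fun j h₁ h₂ => by omega, ?_⟩,
    isInfQuiddity_one_const (by omega)⟩
  show q (i + 1) - 1 = q (i + ((2 : ℕ) : ℤ) - 1) - 1
  rw [Nat.cast_ofNat, add_sub_assoc, show (2 : ℤ) - 1 = 1 by norm_num]

lemma exists_cut (hq : IsInfQuiddity n q) (hn : 2 ≤ n) (hi : q i = 1) :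
    ∃ q', CutsTo n q q' ∧ IsInfQuiddity (n - 1) q' := by
  obtain rfl | hn := hn.eq_or_lt
  · exact hq.exists_cut_of_period_two hi
  · exact hq.exists_cut_of_three_le hn hi

end IsInfQuiddity

def ReducesToGeTwo (n : ℕ) (q : ℤ → ℤ) : Prop :=
  ∃ (m : ℕ) (Q : ℕ → ℤ → ℤ), m < n ∧ Q 0 = q ∧
    (∀ k < m, IsInfQuiddity (n - k) (Q k) ∧ CutsTo (n - k) (Q k) (Q (k + 1))) ∧
    IsInfQuiddity (n - m) (Q m) ∧ (∀ i : ℤ, 2 ≤ Q m i)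

namespace ReducesToGeTwo

variable {n : ℕ} {q q' : ℤ → ℤ}

lemma of_two_le (hn : 1 ≤ n) (hq : IsInfQuiddity n q) (h : ∀ i, 2 ≤ q i) :
    ReducesToGeTwo n q :=
  ⟨0, fun _ => q, hn, rfl, fun _ hk => absurd hk (Nat.not_lt_zero _), hq, h⟩

lemma of_cutsTo (hq : IsInfQuiddity n q) (hcut : CutsTo n q q')
    (h : ReducesToGeTwo (n - 1) q') : ReducesToGeTwo n q := by
  obtain ⟨m, Q, hm, rfl, hsteps, hlast, hge⟩ := h
  refine ⟨m + 1, fun | 0 => q | k + 1 => Q k, by omega, rfl, fun k hk => ?_, ?_, hge⟩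
  · rcases k with _ | k
    · exact ⟨hq, hcut⟩
    · simpa [Nat.sub_add_eq, Nat.sub_right_comm n 1 k] using hsteps k (by omega)
  · simpa [Nat.sub_add_eq, Nat.sub_right_comm n 1 m] using hlast

end ReducesToGeTwo

/-- From any quiddity sequence of an infinite periodic frieze one reaches, after finitely
many cutting reductions, a quiddity sequence all of whose entries are at least 2. -/
theorem infinite_quiddity_reduces (n : ℕ) (hn : 1 ≤ n) (q : ℤ → ℤ)
    (hq : IsInfQuiddity n q) :
    ∃ (m : ℕ) (Q : ℕ → ℤ → ℤ), m < n ∧ Q 0 = q ∧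
      (∀ k < m, IsInfQuiddity (n - k) (Q k) ∧ CutsTo (n - k) (Q k) (Q (k + 1))) ∧
      IsInfQuiddity (n - m) (Q m) ∧ (∀ i : ℤ, 2 ≤ Q m i) := by
  induction n using Nat.strong_induction_on generalizing q with
  | _ n ih =>
  by_cases hge : ∀ i, 2 ≤ q i
  · exact ReducesToGeTwo.of_two_le hn hq hge
  obtain ⟨i, hi⟩ := not_forall.1 hge
  have hqi : q i = 1 := by have := hq.one_le i; omega
  have hn₂ : 2 ≤ n := by
    by_contra hn₂
    obtain rfl : n = 1 := by omega
    exact hi (hq.two_le_of_period_one i)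
  obtain ⟨q', hcut, hq'⟩ := hq.exists_cut hn₂ hqi
  exact ReducesToGeTwo.of_cutsTo hq hcut (ih (n - 1) (by omega) (by omega) q' hq')
end

section
/- Let (s_k)_{k ≥ 0} be the sequence of growth coefficients of an infinite periodic integral frieze, with s_0 = 2 and s_1 = s. Then s_{k+2} = s · s_{k+1} - s_k for all k ≥ 0, and explicitly s_k = s^k + k ∑_{l=1}^{⌊k/2⌋} (-1)^l (1/(k-l)) · C(k-l, l) · s^{k-2l} for k ≥ 1. -/
/-!
Positivity and the diamond rule give the three-term relation
`a (i-1) j + a (i+1) j = a (i-1) (i+1) * a i j` between consecutive rows, so neighbouring pairs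
of rows are related by transfer matrices of determinant one. By periodicity, the column shift by
`n0` acts on rows `0, 1` through a monodromy matrix `P` with `det P = 1`, and the normalisation
of the diagonals turns the `k`-th growth coefficient into `trace (P ^ k)`. Cayley–Hamilton,
`P ^ 2 = trace P • P - 1`, gives the recurrence; hence `s_k = C_k(s)` for the Chebyshev
polynomials `C_k` (`C_k(2 cos θ) = 2 cos kθ`), and the explicit formula is the classical expansion
`C_k = S_k - S_(k-2)` with `S_k(x) = ∑ (-1)^l C(k-l, l) x^(k-2l)`.
-/

open Finset Matrix

theorem sum_choose_pow_add_two {A : Type*} [CommRing A] (x : A) (n : ℕ) :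
    ∑ l ∈ range (n + 3), (-1) ^ l * ((n + 2 - l).choose l : A) * x ^ (n + 2 - 2 * l) =
      x * ∑ l ∈ range (n + 2), (-1) ^ l * ((n + 1 - l).choose l : A) * x ^ (n + 1 - 2 * l) -
        ∑ l ∈ range (n + 1), (-1) ^ l * ((n - l).choose l : A) * x ^ (n - 2 * l) := by
  have pascal : ∀ l ∈ range (n + 1),
      (-1) ^ (l + 1) * ((n + 2 - (l + 1)).choose (l + 1) : A) * x ^ (n + 2 - 2 * (l + 1)) =
        x * ((-1) ^ (l + 1) * ((n + 1 - (l + 1)).choose (l + 1) : A) *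
          x ^ (n + 1 - 2 * (l + 1))) - (-1) ^ l * ((n - l).choose l : A) * x ^ (n - 2 * l) := by
    intro l hl
    rw [mem_range] at hl
    rw [show n + 2 - (l + 1) = n - l + 1 by omega, Nat.choose_succ_succ', Nat.cast_add,
      show n + 1 - (l + 1) = n - l by omega, show n + 2 - 2 * (l + 1) = n - 2 * l by omega]
    rcases Nat.lt_or_ge (n - l) (l + 1) with h | h
    · simp [Nat.choose_eq_zero_of_lt h, pow_succ]
    · rw [show n - 2 * l = n + 1 - 2 * (l + 1) + 1 by omega]
      ring
  rw [sum_range_succ', sum_range_succ, sum_range_succ' _ (n + 1), mul_add x, mul_sum,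
    sum_congr rfl pascal, sum_sub_distrib]
  simp only [Nat.sub_self, Nat.choose_zero_succ, Nat.choose_zero_right, Nat.cast_zero,
    Nat.cast_one, mul_zero, zero_mul, add_zero, Nat.sub_zero]
  ring

theorem Nat.add_one_mul_choose_add_choose (n l : ℕ) :
    (n + 1) * ((n + 1).choose (l + 1) + n.choose l) = (n + l + 2) * (n + 1).choose (l + 1) := by
  rw [mul_add, Nat.add_one_mul_choose_eq]
  ring

namespace Polynomial.Chebyshev

variable {R : Type*} [CommRing R]

theorem S_eq_sum_range (n : ℕ) :
    S R n = ∑ l ∈ range (n + 1), (-1) ^ l * ((n - l).choose l : R[X]) * X ^ (n - 2 * l) := by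
  induction n using Nat.twoStepInduction with
  | zero => simp
  | one => simp [sum_range_succ]
  | more n ih₀ ih₁ =>
    rw [Nat.cast_add, Nat.cast_two, S_add_two, ← Nat.cast_succ, ih₁, ih₀]
    exact (sum_choose_pow_add_two X n).symm

theorem S_eq_sum_range_half (n : ℕ) :
    S R n =
      ∑ l ∈ range (n / 2 + 1), (-1) ^ l * ((n - l).choose l : R[X]) * X ^ (n - 2 * l) := by
  rw [S_eq_sum_range]
  refine (sum_subset (range_subset_range.2 (by omega)) fun l hl hl' => ?_).symm
  rw [mem_range] at hl hl'
  simp [Nat.choose_eq_zero_of_lt (show n - l < l by omega)]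

theorem C_add_two_eq_S_sub_S (n : ℤ) : C R (n + 2) = S R (n + 2) - S R n := by
  rw [C_eq_S_sub_X_mul_S, add_sub_assoc, show (2 : ℤ) - 1 = 1 by norm_num, S_add_two]
  ring

theorem C_eval_eq_sum {K : Type*} [Field K] [CharZero K] (x : K) {k : ℕ} (hk : 1 ≤ k) :
    (C K k).eval x = x ^ k + k * ∑ l ∈ Icc 1 (k / 2),
      (-1) ^ l * (1 / ((k : K) - l)) * ((k - l).choose l : K) * x ^ (k - 2 * l) := by
  obtain rfl | ⟨m, rfl⟩ : k = 1 ∨ ∃ m, k = m + 2 := by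
    rcases k with _ | _ | m <;> simp_all
  · simp
  -- the `(l+1)`-st term of `S (m+2)` against the `l`-th term of `S m`
  have hterm (l : ℕ) (hl : l ∈ range (m / 2 + 1)) :
      (-1) ^ (l + 1) * ((m + 2 - (l + 1)).choose (l + 1) : K) * x ^ (m + 2 - 2 * (l + 1)) -
          (-1) ^ l * ((m - l).choose l : K) * x ^ (m - 2 * l) =
        ((m + 2 : ℕ) : K) * ((-1) ^ (1 + l) * (1 / (((m + 2 : ℕ) : K) - (1 + l : ℕ))) *
          ((m + 2 - (1 + l)).choose (1 + l) : K) * x ^ (m + 2 - 2 * (1 + l))) := by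
    rw [mem_range] at hl
    have key := congrArg (Nat.cast (R := K)) (Nat.add_one_mul_choose_add_choose (m - l) l)
    rw [show m + 2 - (l + 1) = m - l + 1 by omega, show m + 2 - (1 + l) = m - l + 1 by omega,
      show m + 2 - 2 * (l + 1) = m - 2 * l by omega, show m + 2 - 2 * (1 + l) = m - 2 * l by omega,
      show ((m + 2 : ℕ) : K) - (1 + l : ℕ) = ((m - l + 1 : ℕ) : K) by
        rw [← Nat.cast_sub (by omega)]; congr 1; omega]
    have hne : ((m - l + 1 : ℕ) : K) ≠ 0 := Nat.cast_ne_zero.2 (Nat.succ_ne_zero _)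
    push_cast at key hne ⊢
    have hm : (m : K) = ((m - l : ℕ) : K) + l := by
      rw [← Nat.cast_add, Nat.sub_add_cancel (by omega)]
    field_simp
    rw [hm, add_comm 1 l]
    linear_combination (x ^ (m - 2 * l) * (-1) ^ (l + 1)) * key
  rw [show ((m + 2 : ℕ) : ℤ) = m + 2 by push_cast; ring, C_add_two_eq_S_sub_S, eval_sub,
    ← Nat.cast_ofNat, ← Nat.cast_add, S_eq_sum_range_half, S_eq_sum_range_half,
    show (m + 2) / 2 = m / 2 + 1 by omega, sum_range_succ', ← Ico_add_one_right_eq_Icc,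
    sum_Ico_eq_sum_range, Nat.add_sub_cancel, mul_sum, ← sum_congr rfl hterm]
  simp only [eval_add, eval_finsetSum, eval_mul, eval_pow, eval_neg, eval_one, eval_natCast,
    eval_X, sum_sub_distrib, mul_zero, Nat.sub_zero, Nat.choose_zero_right]
  ring

theorem eq_C_eval_of_recurrence {u : ℕ → R} (h0 : u 0 = 2)
    (hrec : ∀ k, u (k + 2) = u 1 * u (k + 1) - u k) (k : ℕ) : u k = (C R k).eval (u 1) := by
  induction k using Nat.twoStepInduction with
  | zero => simp [h0]
  | one => simp
  | more k ih₀ ih₁ =>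
    rw [hrec, ih₀, ih₁]
    push_cast [C_add_two]
    simp

end Polynomial.Chebyshev

theorem Matrix.trace_pow_add_two {R : Type*} [CommRing R] {P : Matrix (Fin 2) (Fin 2) R}
    (hP : P.det = 1) (k : ℕ) :
    trace (P ^ (k + 2)) = trace P * trace (P ^ (k + 1)) - trace (P ^ k) := by
  have cayley_hamilton : P ^ 2 = trace P • P - 1 := by
    ext i j
    rw [det_fin_two] at hP
    fin_cases i <;> fin_cases j <;>
      simp only [sq, mul_apply, Fin.sum_univ_two, trace_fin_two, sub_apply, smul_apply,
        smul_eq_mul, one_apply] <;> grind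
  rw [pow_add, cayley_hamilton, mul_sub, mul_smul_comm, mul_one, ← pow_succ, trace_sub,
    trace_smul, smul_eq_mul]

section Frieze

variable {R : Type*} [CommRing R] {a : ℤ → ℤ → R}

theorem frieze_row_relation_propagate
    (hdiamond : ∀ i j, a i j * a (i + 1) (j + 1) - a i (j + 1) * a (i + 1) j = 1)
    (c : R) (i j : ℤ) :
    (a (i - 1) j + a (i + 1) j - c * a i j) * a i (j + 1) =
      (a (i - 1) (j + 1) + a (i + 1) (j + 1) - c * a i (j + 1)) * a i j := by
  have h := hdiamond (i - 1) j
  rw [sub_add_cancel] at h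
  linear_combination h - hdiamond i j

theorem frieze_row_relation [IsDomain R] (h0 : ∀ i, a i i = 0) (h1 : ∀ i, a i (i + 1) = 1)
    (hneg : ∀ i, a i (i - 1) = -1)
    (hdiamond : ∀ i j, a i j * a (i + 1) (j + 1) - a i (j + 1) * a (i + 1) j = 1)
    (hne : ∀ i j, i < j → a i j ≠ 0) {i j : ℤ} (hij : i ≤ j) :
    a (i - 1) j + a (i + 1) j = a (i - 1) (i + 1) * a i j := by
  rw [le_iff_eq_or_lt] at hij
  rcases hij with rfl | hij
  · have h1' := h1 (i - 1)
    have hneg' := hneg (i + 1)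
    rw [sub_add_cancel] at h1'
    rw [add_sub_cancel_right] at hneg'
    rw [h1', hneg', h0]
    ring
  rw [← sub_eq_zero]
  induction j, Int.add_one_le_iff.2 hij using Int.leInduction with
  | base => rw [h0, h1]; ring
  | succ j hj ih =>
    have h := frieze_row_relation_propagate hdiamond (a (i - 1) (i + 1)) i j
    rw [ih (by omega), zero_mul] at h
    exact (mul_eq_zero.1 h.symm).resolve_right (hne i j (by omega))

theorem exists_transfer_matrix (c : ℤ → R)
    (hrow : ∀ i j, i ≤ j → a (i - 1) j + a (i + 1) j = c i * a i j) (i : ℤ) (m : ℕ) :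
    ∃ P : Matrix (Fin 2) (Fin 2) R, P.det = 1 ∧
      ∀ j, i ≤ j → ![a (i - m) j, a (i - m + 1) j] = P *ᵥ ![a i j, a (i + 1) j] := by
  induction m with
  | zero => exact ⟨1, det_one, fun j _ => by simp⟩
  | succ m ih =>
    obtain ⟨P, hdet, hP⟩ := ih
    refine ⟨!![c (i - m), -1; 1, 0] * P, by rw [det_mul, hdet, det_fin_two_of]; ring,
      fun j hj => ?_⟩
    rw [← mulVec_mulVec, ← hP j hj, mulVec_fin_two, Nat.cast_succ, ← sub_sub, sub_add_cancel]
    refine vec2_eq ?_ ?_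
    · show a (i - m - 1) j = c (i - m) * a (i - m) j + -1 * a (i - m + 1) j
      linear_combination hrow (i - m) j (by omega)
    · show a (i - m) j = 1 * a (i - m) j + 0 * a (i - m + 1) j
      ring

theorem exists_monodromy (c : ℤ → R)
    (hrow : ∀ i j, i ≤ j → a (i - 1) j + a (i + 1) j = c i * a i j) {n : ℕ}
    (hper : ∀ i j, a (i + n) (j + n) = a i j) :
    ∃ P : Matrix (Fin 2) (Fin 2) R, P.det = 1 ∧
      ∀ (k : ℕ) (j : ℤ), 0 ≤ j →
        ![a 0 (j + k * n), a 1 (j + k * n)] = P ^ k *ᵥ ![a 0 j, a 1 j] := by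
  obtain ⟨P, hdet, hP⟩ := exists_transfer_matrix c hrow 0 n
  simp only [zero_sub, zero_add] at hP
  refine ⟨P, hdet, fun k j hj => ?_⟩
  induction k with
  | zero => simp
  | succ k ih =>
    rw [Nat.cast_succ, add_one_mul, ← add_assoc, pow_succ', ← mulVec_mulVec, ← ih,
      ← hP _ (by positivity), ← hper (-n), ← hper (-n + 1)]
    simp

theorem exists_det_eq_one_trace_pow (c : ℤ → R)
    (hrow : ∀ i j, i ≤ j → a (i - 1) j + a (i + 1) j = c i * a i j) (h0 : ∀ i, a i i = 0)
    (h1 : ∀ i, a i (i + 1) = 1) (hneg : ∀ i, a i (i - 1) = -1) {n : ℕ}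
    (hper : ∀ i j, a (i + n) (j + n) = a i j) :
    ∃ P : Matrix (Fin 2) (Fin 2) R, P.det = 1 ∧
      ∀ k : ℕ, a 0 (k * n + 1) - a 1 (k * n) = trace (P ^ k) := by
  obtain ⟨P, hdet, hP⟩ := exists_monodromy c hrow hper
  have h01 : a 0 1 = 1 := by simpa using h1 0
  have h10 : a 1 0 = -1 := by simpa using hneg 1
  refine ⟨P, hdet, fun k => ?_⟩
  have hcol1 := hP k 1 zero_le_one
  have hcol0 := hP k 0 le_rfl
  rw [h01, h0, mulVec_fin_two, add_comm] at hcol1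
  rw [h0, h10, mulVec_fin_two, zero_add] at hcol0
  simp only [vecCons_inj, and_true, cons_val_zero, cons_val_one] at hcol1 hcol0
  rw [trace_fin_two, hcol1.1, hcol0.2]
  ring

end Frieze

theorem growth_coefficients_recurrence_general (n0 : ℕ) (a : ℤ → ℤ → ℤ)
    (h0 : ∀ i : ℤ, a i i = 0) (h1 : ∀ i : ℤ, a i (i + 1) = 1)
    (hneg : ∀ i : ℤ, a i (i - 1) = -1)
    (hpos : ∀ i j : ℤ, i + 2 ≤ j → 0 < a i j)
    (hdiamond : ∀ i j : ℤ, a i j * a (i + 1) (j + 1) - a i (j + 1) * a (i + 1) j = 1)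
    (hper : ∀ i j : ℤ, a (i + n0) (j + n0) = a i j)
    (S : ℕ → ℤ)
    (hS : ∀ (k : ℕ) (i : ℤ), S k = a i (i + k * n0 + 1) - a (i + 1) (i + k * n0)) :
    (∀ k : ℕ, S (k + 2) = S 1 * S (k + 1) - S k) ∧
    (∀ k : ℕ, 1 ≤ k → (S k : ℚ) = (S 1 : ℚ) ^ k +
      k * ∑ l ∈ Finset.Icc 1 (k / 2),
        (-1 : ℚ) ^ l * (1 / ((k : ℚ) - l)) * (Nat.choose (k - l) l : ℚ)
          * (S 1 : ℚ) ^ (k - 2 * l)) := by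
  have hne : ∀ i j, i < j → a i j ≠ 0 := fun i j hij => by
    rcases (Int.add_one_le_iff.2 hij).eq_or_lt with rfl | h
    · rw [h1]
      exact one_ne_zero
    · exact (hpos i j (by omega)).ne'
  obtain ⟨P, hdet, htrace⟩ := exists_det_eq_one_trace_pow _
    (fun _ _ => frieze_row_relation h0 h1 hneg hdiamond hne) h0 h1 hneg hper
  have hS_trace (k : ℕ) : S k = trace (P ^ k) := by
    rw [hS k 0, ← htrace, zero_add, zero_add]
  have hrec (k : ℕ) : S (k + 2) = S 1 * S (k + 1) - S k := by
    simpa only [hS_trace, pow_one] using trace_pow_add_two hdet k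
  refine ⟨hrec, fun k hk => ?_⟩
  have hS0 : S 0 = 2 := by simp [hS_trace]
  rw [Polynomial.Chebyshev.eq_C_eval_of_recurrence (u := fun k => (S k : ℚ)) (by simp [hS0])
    (fun k => mod_cast hrec k) k, Polynomial.Chebyshev.C_eval_eq_sum _ hk]

/-- Let `a` be an infinite periodic integral frieze with minimal period `n0` (with the
conventions `a i (i+1) = 1`, `a i i = 0`, `a i (i-1) = -1` and the diamond rule), and let
`S k` be its `k`-th growth coefficient `a i (i + k*n0 + 1) - a (i+1) (i + k*n0)` (independent
of `i`).  Then `S` satisfies `S (k+2) = S 1 * S (k+1) - S k`, and explicitly, with `s = S 1`,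
`S k = s^k + k * ∑_{l=1}^{⌊k/2⌋} (-1)^l (1/(k-l)) C(k-l, l) s^(k-2l)` for `k ≥ 1`. -/
theorem growth_coefficients_recurrence (n0 : ℕ) (hn0 : 1 ≤ n0) (a : ℤ → ℤ → ℤ)
    (h0 : ∀ i : ℤ, a i i = 0) (h1 : ∀ i : ℤ, a i (i + 1) = 1)
    (hneg : ∀ i : ℤ, a i (i - 1) = -1)
    (hpos : ∀ i j : ℤ, i + 2 ≤ j → 0 < a i j)
    (hdiamond : ∀ i j : ℤ, a i j * a (i + 1) (j + 1) - a i (j + 1) * a (i + 1) j = 1)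
    (hper : ∀ i j : ℤ, a (i + n0) (j + n0) = a i j)
    (hmin : ∀ m : ℕ, 1 ≤ m → (∀ i j : ℤ, a (i + m) (j + m) = a i j) → n0 ≤ m)
    (S : ℕ → ℤ)
    (hS : ∀ (k : ℕ) (i : ℤ), S k = a i (i + k * n0 + 1) - a (i + 1) (i + k * n0)) :
    (∀ k : ℕ, S (k + 2) = S 1 * S (k + 1) - S k) ∧
    (∀ k : ℕ, 1 ≤ k → (S k : ℚ) = (S 1 : ℚ) ^ k +
      k * ∑ l ∈ Finset.Icc 1 (k / 2),
        (-1 : ℚ) ^ l * (1 / ((k : ℚ) - l)) * (Nat.choose (k - l) l : ℚ)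
          * (S 1 : ℚ) ^ (k - 2 * l)) :=
  growth_coefficients_recurrence_general n0 a h0 h1 hneg hpos hdiamond hper S hS
end
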